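/- Let A be a left coherent ring. Then every Gabriel filter of left ideals on A which has a filter basis of finitely generated ideals (i.e., is of finite type) is Giraud-finite: its associated Giraud subcategory X_G is closed under direct limits in A-Mod. -/
import Mathlib


section
variable (A : Type) [Ring A]

/-- The left ideal `(I : x) = {a : A | a * x ∈ I}`. -/
def idealColon (I : Ideal A) (x : A) : Ideal A :=
  Submodule.comap (LinearMap.toSpanSingleton A A x) I

/-- `G` is a Gabriel filter of left ideals of `A`. -/
def IsGabrielFilter (G : Set (Ideal A)) : Prop :=
  (⊤ : Ideal A) ∈ G ∧
  (∀ I J : Ideal A, I ∈ G → I ≤ J → J ∈ G) ∧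
  (∀ I J : Ideal A, I ∈ G → J ∈ G → I ⊓ J ∈ G) ∧
  (∀ I ∈ G, ∀ x : A, idealColon A I x ∈ G) ∧
  (∀ (J : Ideal A), (∃ I ∈ G, ∀ x ∈ I, idealColon A J x ∈ G) → J ∈ G)

/-- `M` is `G`-closed: `Hom_A(A/I, M) = 0 = Ext¹_A(A/I, M)` for all `I ∈ G`, where the
vanishing of `Ext¹` is expressed by the splitting of all extensions of `A/I` by `M`. -/
def IsGClosed (G : Set (Ideal A)) (M : Type) [AddCommGroup M] [Module A M] : Prop :=
  ∀ I ∈ G,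
    (∀ f : (A ⧸ I) →ₗ[A] M, f = 0) ∧
    (∀ (E : Type) [AddCommGroup E] [Module A E] (i : M →ₗ[A] E) (p : E →ₗ[A] (A ⧸ I)),
      Function.Injective i → Function.Surjective p →
      LinearMap.ker p = LinearMap.range i →
      ∃ s : (A ⧸ I) →ₗ[A] E, p ∘ₗ s = LinearMap.id)

/-- The Giraud subcategory `X_G` is closed under direct limits. -/
def GClosedUnderDirectLimits (G : Set (Ideal A)) : Prop :=
  ∀ (K : Type) [Preorder K] [IsDirected K (· ≤ ·)] [DecidableEq K] [Nonempty K]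
    (F : K → Type) [∀ k, AddCommGroup (F k)] [∀ k, Module A (F k)]
    (f : ∀ i j : K, i ≤ j → F i →ₗ[A] F j) [DirectedSystem F (fun i j h => f i j h)],
    (∀ k, IsGClosed A G (F k)) → IsGClosed A G (Module.DirectLimit F f)

section
variable {A : Type} [Ring A]

lemma aux_finset_bound {K : Type} [Preorder K] [IsDirected K (· ≤ ·)] {α : Type}
    (S : Finset α) (k0 : K) (P : α → K → Prop)
    (mono : ∀ a l l', k0 ≤ l → l ≤ l' → P a l → P a l')
    (h : ∀ a ∈ S, ∃ l, k0 ≤ l ∧ P a l) :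
    ∃ l, k0 ≤ l ∧ ∀ a ∈ S, P a l := by
  classical
  induction S using Finset.induction_on with
  | empty => exact ⟨k0, le_rfl, by simp⟩
  | @insert a S ha ih =>
    obtain ⟨l, hl, hP⟩ := ih (fun b hb => h b (Finset.mem_insert_of_mem hb))
    obtain ⟨l', hl', hP'⟩ := h a (Finset.mem_insert_self a S)
    obtain ⟨l'', h1, h2⟩ := exists_ge_ge l l'
    refine ⟨l'', hl.trans h1, ?_⟩
    intro b hb
    rcases Finset.mem_insert.1 hb with rfl | hb
    · exact mono b l' l'' hl' h2 hP'
    · exact mono b l l'' hl h1 (hP b hb)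

end

section
variable {A : Type} [Ring A]
variable {K : Type} [Preorder K] [IsDirected K (· ≤ ·)] [DecidableEq K] [Nonempty K]
  (F : K → Type) [∀ k, AddCommGroup (F k)] [∀ k, Module A (F k)]
  (f : ∀ i j : K, i ≤ j → F i →ₗ[A] F j) [DirectedSystem F (fun i j h => f i j h)]

lemma aux_torsion_vanish (J : Ideal A) (hJfg : J.FG)
    (hF1 : ∀ l, ∀ g : (A ⧸ J) →ₗ[A] F l, g = 0)
    (m : Module.DirectLimit F f) (hm : ∀ a ∈ J, a • m = 0) : m = 0 := by
  obtain ⟨k, x, rfl⟩ := Module.DirectLimit.exists_of m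
  obtain ⟨S, hS⟩ := hJfg
  have hSmem : ∀ a ∈ S, a ∈ J := fun a ha => hS ▸ Submodule.subset_span ha
  have hex : ∀ a ∈ S, ∃ l, k ≤ l ∧ ∀ h : k ≤ l, a • f k l h x = 0 := by
    intro a ha
    have h0 : Module.DirectLimit.of A K F f k (a • x) = 0 := by
      rw [map_smul]; exact hm a (hSmem a ha)
    obtain ⟨l, hl, hz⟩ := Module.DirectLimit.of.zero_exact h0
    exact ⟨l, hl, fun h => by rw [← map_smul]; exact hz⟩
  obtain ⟨l, hkl, hall⟩ := aux_finset_bound S k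
    (fun a l => ∀ h : k ≤ l, a • f k l h x = 0)
    (by
      intro a l l' hl hll' hP h
      rw [← DirectedSystem.map_map (f := fun i j h => f i j h) hl hll', ← map_smul,
        hP hl, map_zero])
    hex
  set y := f k l hkl x with hy
  have hle : J ≤ LinearMap.ker (LinearMap.toSpanSingleton A (F l) y) := by
    rw [← hS, Ideal.span_le]
    intro a haS
    simp only [SetLike.mem_coe, LinearMap.mem_ker, LinearMap.toSpanSingleton_apply]
    exact hall a haS hkl
  have hg := hF1 l (Submodule.liftQ J _ hle)
  have hy0 : y = 0 := by
    have h1 : Submodule.liftQ J _ hle (Submodule.Quotient.mk (1 : A)) = 0 := by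
      rw [hg]; rfl
    rwa [Submodule.liftQ_apply, LinearMap.toSpanSingleton_apply, one_smul] at h1
  rw [← Module.DirectLimit.of_f (hij := hkl), ← hy, hy0, map_zero]

end

section
variable {A : Type} [Ring A]
variable {K : Type} [Preorder K] [IsDirected K (· ≤ ·)] [DecidableEq K] [Nonempty K]
  (F : K → Type) [∀ k, AddCommGroup (F k)] [∀ k, Module A (F k)]
  (f : ∀ i j : K, i ≤ j → F i →ₗ[A] F j) [DirectedSystem F (fun i j h => f i j h)]

lemma aux_factor (P : Type) [AddCommGroup P] [Module A P] (hP : Module.FinitePresentation A P)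
    (φ : P →ₗ[A] Module.DirectLimit F f) :
    ∃ (k : K) (g : P →ₗ[A] F k), ∀ y : P, Module.DirectLimit.of A K F f k (g y) = φ y := by
  classical
  obtain ⟨s, hs, hker⟩ := hP.out
  set π : (↥s →₀ A) →ₗ[A] P := Finsupp.linearCombination A ((↑) : ↥s → P) with hπdef
  have hπ : Function.Surjective π := by
    rw [← LinearMap.range_eq_top, hπdef, Finsupp.range_linearCombination, Subtype.range_coe]
    exact hs
  have hex : ∀ i : ↥s, ∃ k x, Module.DirectLimit.of A K F f k x = φ ↑i :=
    fun i => Module.DirectLimit.exists_of _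
  choose ki xi hxi using hex
  obtain ⟨k, hk⟩ := (Finset.univ.image ki).exists_le
  have hki : ∀ i, ki i ≤ k := fun i =>
    hk _ (Finset.mem_image_of_mem ki (Finset.mem_univ i))
  set x : ↥s → F k := fun i => f (ki i) k (hki i) (xi i) with hxdef
  have hx : ∀ i, Module.DirectLimit.of A K F f k (x i) = φ ↑i := fun i => by
    rw [hxdef]; rw [Module.DirectLimit.of_f, hxi]
  set g0 : (↥s →₀ A) →ₗ[A] F k := Finsupp.linearCombination A x with hg0def
  have hcomm : ∀ y, Module.DirectLimit.of A K F f k (g0 y) = φ (π y) := by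
    have : (Module.DirectLimit.of A K F f k).comp g0 = φ.comp π := by
      refine Finsupp.lhom_ext fun i b => ?_
      simp only [LinearMap.comp_apply, hg0def, hπdef, Finsupp.linearCombination_single,
        map_smul, hx]
    intro y
    exact DFunLike.congr_fun this y
  obtain ⟨T, hT⟩ := hker
  have hTz : ∀ t ∈ T, ∃ l, k ≤ l ∧ ∀ h : k ≤ l, f k l h (g0 t) = 0 := by
    intro t ht
    have htk : π t = 0 := by
      have : t ∈ LinearMap.ker π := hT ▸ Submodule.subset_span ht
      exact this
    have h0 : Module.DirectLimit.of A K F f k (g0 t) = 0 := by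
      rw [hcomm, htk, map_zero]
    obtain ⟨l, hl, hz⟩ := Module.DirectLimit.of.zero_exact h0
    exact ⟨l, hl, fun _ => hz⟩
  obtain ⟨l, hkl, hTall⟩ := aux_finset_bound T k
    (fun t l => ∀ h : k ≤ l, f k l h (g0 t) = 0)
    (by
      intro t l l' hl hll' hPt h
      rw [← DirectedSystem.map_map (f := fun i j h => f i j h) hl hll', hPt hl, map_zero])
    hTz
  set g1 : (↥s →₀ A) →ₗ[A] F l := (f k l hkl).comp g0 with hg1def
  have hle : LinearMap.ker π ≤ LinearMap.ker g1 := by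
    rw [← hT, Submodule.span_le]
    intro t ht
    exact LinearMap.mem_ker.2 (hTall t ht hkl)
  set e := π.quotKerEquivOfSurjective hπ with hedef
  refine ⟨l, (Submodule.liftQ _ g1 hle).comp (e.symm : P →ₗ[A] _), fun y => ?_⟩
  obtain ⟨z, rfl⟩ := hπ y
  have he : e.symm (π z) = Submodule.Quotient.mk z := by
    apply e.injective
    rw [e.apply_symm_apply]
    rfl
  simp only [LinearMap.comp_apply, LinearEquiv.coe_coe, he, Submodule.liftQ_apply, hg1def,
    LinearMap.comp_apply]
  rw [Module.DirectLimit.of_f, hcomm]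

end

section
variable {A : Type} [Ring A]

lemma aux_preimage {M E : Type} [AddCommGroup M] [Module A M] [AddCommGroup E] [Module A E]
    (i : M →ₗ[A] E) (inj : Function.Injective i) (I : Ideal A) (x : E)
    (hx : ∀ a : A, a ∈ I → a • x ∈ LinearMap.range i) :
    ∃ φ : ↥I →ₗ[A] M, ∀ a : ↥I, i (φ a) = (a : A) • x := by
  set t : ↥I →ₗ[A] E := (LinearMap.toSpanSingleton A E x).comp I.subtype with htdef
  have ht : ∀ a : ↥I, t a ∈ LinearMap.range i := fun a => hx a a.2
  set t' := LinearMap.codRestrict (LinearMap.range i) t ht with ht'def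
  set eI := LinearEquiv.ofInjective i inj with heIdef
  refine ⟨(eI.symm : ↥(LinearMap.range i) →ₗ[A] M).comp t', fun a => ?_⟩
  have h1 : ∀ z : M, i z = ↑(eI z) := fun z => rfl
  simp only [LinearMap.comp_apply, LinearEquiv.coe_coe]
  rw [h1, eI.apply_symm_apply]
  rfl

lemma aux_extend {N : Type} [AddCommGroup N] [Module A N] (J : Ideal A)
    (hsplit : ∀ (E : Type) [AddCommGroup E] [Module A E] (i : N →ₗ[A] E)
      (p : E →ₗ[A] (A ⧸ J)),
      Function.Injective i → Function.Surjective p → LinearMap.ker p = LinearMap.range i →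
      ∃ s : (A ⧸ J) →ₗ[A] E, p ∘ₗ s = LinearMap.id)
    (g : ↥J →ₗ[A] N) :
    ∃ m : N, ∀ a : ↥J, g a = (a : A) • m := by
  classical
  set W : Submodule A (N × A) := LinearMap.range (LinearMap.prod g (-(J.subtype))) with hWdef
  have hWmem : ∀ a : ↥J, (g a, -(a : A)) ∈ W := by
    intro a
    exact ⟨a, rfl⟩
  set i : N →ₗ[A] (N × A) ⧸ W := W.mkQ.comp (LinearMap.inl A N A) with hidef
  have hWp : W ≤ LinearMap.ker (J.mkQ.comp (LinearMap.snd A N A)) := by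
    rintro _ ⟨a, rfl⟩
    simp only [LinearMap.mem_ker, LinearMap.comp_apply, LinearMap.prod_apply, Pi.prod,
      LinearMap.snd_apply, LinearMap.neg_apply, Submodule.mkQ_apply]
    rw [Submodule.Quotient.mk_eq_zero]
    exact neg_mem a.2
  set p : ((N × A) ⧸ W) →ₗ[A] A ⧸ J := Submodule.liftQ W _ hWp with hpdef
  have hi0 : ∀ n, i n = 0 → n = 0 := by
    intro n hn
    have : ((n, 0) : N × A) ∈ W := by
      rwa [hidef, LinearMap.comp_apply, Submodule.mkQ_apply, Submodule.Quotient.mk_eq_zero] at hn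
    obtain ⟨a, ha⟩ := this
    have ha2 : -(a : A) = 0 := congrArg Prod.snd ha
    have ha0 : a = 0 := Subtype.ext (by simpa using ha2)
    have ha1 : g a = n := congrArg Prod.fst ha
    rw [← ha1, ha0, map_zero]
  have hi : Function.Injective i := by
    intro a b hab
    have := hi0 (a - b) (by rw [map_sub, hab, sub_self])
    exact sub_eq_zero.mp this
  have hp : Function.Surjective p := by
    intro q
    obtain ⟨b, rfl⟩ := Submodule.mkQ_surjective J q
    exact ⟨W.mkQ (0, b), by simp [hpdef]⟩
  have hkerp : LinearMap.ker p = LinearMap.range i := by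
    ext z
    constructor
    · intro hz
      obtain ⟨⟨n, b⟩, rfl⟩ := Submodule.mkQ_surjective W z
      have hb : b ∈ J := by
        rw [LinearMap.mem_ker, hpdef, Submodule.mkQ_apply, Submodule.liftQ_apply] at hz
        simpa [Submodule.Quotient.mk_eq_zero] using hz
      refine ⟨n + g ⟨b, hb⟩, ?_⟩
      rw [hidef, LinearMap.comp_apply, Submodule.mkQ_apply, Submodule.mkQ_apply,
        Submodule.Quotient.eq]
      have : ((n + g ⟨b, hb⟩, 0) : N × A) - (n, b) = (g ⟨b, hb⟩, -b) := by
        ext <;> simp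
      simp only [LinearMap.inl_apply]
      rw [this]
      exact hWmem ⟨b, hb⟩
    · rintro ⟨n, rfl⟩
      rw [LinearMap.mem_ker, hidef, LinearMap.comp_apply, Submodule.mkQ_apply, hpdef,
        Submodule.liftQ_apply]
      simp
  obtain ⟨s, hs⟩ := hsplit ((N × A) ⧸ W) i p hi hp hkerp
  have hsq : ∀ q, p (s q) = q := fun q => DFunLike.congr_fun hs q
  set e0 : (N × A) ⧸ W := W.mkQ (0, 1) with he0def
  have hpe0 : p e0 = Submodule.Quotient.mk 1 := by
    rw [he0def, hpdef, Submodule.mkQ_apply, Submodule.liftQ_apply]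
    rfl
  have hmem : e0 - s (Submodule.Quotient.mk 1) ∈ LinearMap.ker p := by
    rw [LinearMap.mem_ker, map_sub, hpe0, hsq, sub_self]
  rw [hkerp] at hmem
  obtain ⟨m, hm⟩ := hmem
  refine ⟨m, fun a => ?_⟩
  apply hi
  rw [map_smul, hm, smul_sub]
  have h1 : (a : A) • s (Submodule.Quotient.mk (1 : A)) = 0 := by
    rw [← map_smul]
    have : (a : A) • (Submodule.Quotient.mk (1 : A) : A ⧸ J) = 0 := by
      rw [← Submodule.Quotient.mk_smul, smul_eq_mul, mul_one, Submodule.Quotient.mk_eq_zero]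
      exact a.2
    rw [this, map_zero]
  rw [h1, sub_zero, he0def, ← map_smul, hidef, LinearMap.comp_apply,
    Submodule.mkQ_apply, Submodule.mkQ_apply, Submodule.Quotient.eq]
  simp only [LinearMap.inl_apply]
  have : ((g a, 0) : N × A) - (a : A) • ((0, 1) : N × A) = (g a, -(a : A)) := by
    ext <;> simp
  rw [this]
  exact hWmem a

end

/-- Over a left coherent ring `A` (every finitely generated left ideal is finitely
presented), every Gabriel filter of finite type is Giraud-finite: its associated Giraud
subcategory is closed under direct limits. -/
theorem statement18
    (hcoh : ∀ I : Ideal A, I.FG → Module.FinitePresentation A I)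
    (G : Set (Ideal A)) (hG : IsGabrielFilter A G)
    (hft : ∀ I ∈ G, ∃ J ∈ G, J ≤ I ∧ J.FG) :
    GClosedUnderDirectLimits A G := by
  intro K _ _ _ _ F _ _ f _ hFk
  intro I hI
  have torsion : ∀ Jc ∈ G, ∀ m : Module.DirectLimit F f, (∀ a ∈ Jc, a • m = 0) → m = 0 := by
    intro Jc hJc m hm
    obtain ⟨J, hJG, hJle, hJfg⟩ := hft Jc hJc
    exact aux_torsion_vanish F f J hJfg (fun l => (hFk l J hJG).1) m
      (fun a ha => hm a (hJle ha))
  constructor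
  · intro g
    have h1 : g (Submodule.Quotient.mk 1) = 0 := by
      apply torsion I hI
      intro a ha
      rw [← map_smul]
      have h2 : (a : A) • (Submodule.Quotient.mk (1 : A) : A ⧸ I)
          = Submodule.Quotient.mk a := by
        rw [← Submodule.Quotient.mk_smul, smul_eq_mul, mul_one]
      rw [h2, (Submodule.Quotient.mk_eq_zero _).2 ha, map_zero]
    apply LinearMap.ext
    intro q
    obtain ⟨a, rfl⟩ := Submodule.mkQ_surjective I q
    have h3 : (I.mkQ a : A ⧸ I) = a • (Submodule.Quotient.mk (1 : A)) := by
      rw [← Submodule.Quotient.mk_smul, smul_eq_mul, mul_one, Submodule.mkQ_apply]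
    rw [h3, map_smul, h1, smul_zero]
    rfl
  · intro E _ _ i p inj surj hkerp
    obtain ⟨x, hx⟩ := surj (Submodule.Quotient.mk 1)
    have hmkI : ∀ a : A, a • (Submodule.Quotient.mk (1 : A) : A ⧸ I)
        = Submodule.Quotient.mk a := fun a => by
      rw [← Submodule.Quotient.mk_smul, smul_eq_mul, mul_one]
    have hrange : ∀ a : A, a ∈ I → a • x ∈ LinearMap.range i := by
      intro a ha
      rw [← hkerp, LinearMap.mem_ker, map_smul, hx, hmkI,
        (Submodule.Quotient.mk_eq_zero _).2 ha]
    obtain ⟨φ, hφ⟩ := aux_preimage i inj I x hrange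
    obtain ⟨J, hJG, hJle, hJfg⟩ := hft I hI
    set ι : ↥J →ₗ[A] ↥I := Submodule.inclusion hJle with hιdef
    obtain ⟨k, g, hg⟩ := aux_factor F f ↥J (hcoh J hJfg) (φ.comp ι)
    obtain ⟨m0, hm0⟩ := aux_extend J (hFk k J hJG).2 g
    set m : Module.DirectLimit F f := Module.DirectLimit.of A K F f k m0 with hmdef
    set x' : E := x - i m with hx'def
    have hJx' : ∀ c ∈ J, c • x' = 0 := by
      intro c hc
      have h1 : i (φ (ι ⟨c, hc⟩)) = c • x := hφ _
      have h2 : φ (ι ⟨c, hc⟩) = c • m := by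
        have := hg ⟨c, hc⟩
        rw [hm0] at this
        rw [← LinearMap.comp_apply, ← this, map_smul]
      rw [hx'def, smul_sub, ← h1, h2, map_smul, sub_self]
    have hpx' : p x' = Submodule.Quotient.mk 1 := by
      have : p (i m) = 0 := by
        have : i m ∈ LinearMap.range i := ⟨m, rfl⟩
        rw [← hkerp, LinearMap.mem_ker] at this
        exact this
      rw [hx'def, map_sub, hx, this, sub_zero]
    have hrange' : ∀ b : A, b ∈ I → b • x' ∈ LinearMap.range i := by
      intro b hb
      rw [← hkerp, LinearMap.mem_ker, map_smul, hpx', hmkI,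
        (Submodule.Quotient.mk_eq_zero _).2 hb]
    obtain ⟨ρ, hρ⟩ := aux_preimage i inj I x' hrange'
    have hρJ : ∀ c (hc : c ∈ J), ρ ⟨c, hJle hc⟩ = 0 := by
      intro c hc
      apply inj
      rw [hρ, map_zero]
      exact hJx' c hc
    have hIx' : ∀ a : ↥I, (a : A) • x' = 0 := by
      intro a
      suffices hz : ρ a = 0 by rw [← hρ a, hz, map_zero]
      apply torsion (idealColon A J ↑a) (hG.2.2.2.1 J hJG ↑a)
      intro b hb
      have hba : b * (a : A) ∈ J := hb
      rw [← map_smul]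
      have hcoe : ((b • a : ↥I) : A) = b * (a : A) := rfl
      have : (b • a : ↥I) = ⟨b * (a : A), hJle hba⟩ := Subtype.ext hcoe
      rw [this, hρJ _ hba]
    have hker2 : I ≤ LinearMap.ker (LinearMap.toSpanSingleton A E x') := by
      intro a ha
      rw [LinearMap.mem_ker, LinearMap.toSpanSingleton_apply]
      exact hIx' ⟨a, ha⟩
    refine ⟨Submodule.liftQ I (LinearMap.toSpanSingleton A E x') hker2, ?_⟩
    apply LinearMap.ext
    intro q
    obtain ⟨a, rfl⟩ := Submodule.mkQ_surjective I q
    rw [LinearMap.comp_apply, Submodule.mkQ_apply, Submodule.liftQ_apply,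
      LinearMap.toSpanSingleton_apply, map_smul, hpx', hmkI]
    rfl
end
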